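/- arXiv:2403.14976 — 2 statements merged into one kernel-verified Lean document; each statement's English description precedes it below -/
import Mathlib

section
/- The BCZ map Φ(s,t) = (t, -s + ⌊(1+s)/t⌋·t) maps the Farey triangle Ω = {(s,t) : 0 < s ≤ 1, 0 < t ≤ 1, s + t > 1} into itself. -/
open Set

/-- The Farey triangle. -/
def FareyTriangle : Set (ℝ × ℝ) :=
  {p | 0 < p.1 ∧ p.1 ≤ 1 ∧ 0 < p.2 ∧ p.2 ≤ 1 ∧ p.1 + p.2 > 1}

/-- The BCZ map. -/
noncomputable def BCZ (p : ℝ × ℝ) : ℝ × ℝ :=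
  (p.2, -p.1 + (⌊(1 + p.1) / p.2⌋ : ℝ) * p.2)

theorem BCZ_maps_into (p : ℝ × ℝ) (hp : p ∈ FareyTriangle) :
    BCZ p ∈ FareyTriangle := by
  obtain ⟨hs, hs1, ht, ht1, hst⟩ := hp
  set s := p.1; set t := p.2
  set k : ℝ := (⌊(1 + s) / t⌋ : ℝ) with hk
  have h1 : k ≤ (1 + s) / t := Int.floor_le _
  have h2 : (1 + s) / t < k + 1 := Int.lt_floor_add_one _
  have hkt : k * t ≤ 1 + s := by
    have := mul_le_mul_of_nonneg_right h1 ht.le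
    rwa [div_mul_cancel₀ _ ht.ne'] at this
  have hkt2 : 1 + s < (k + 1) * t := by
    have := mul_lt_mul_of_pos_right h2 ht
    rwa [div_mul_cancel₀ _ ht.ne'] at this
  refine ⟨ht, ht1, ?_, ?_, ?_⟩ <;> simp only [BCZ] <;> nlinarith
end

section
/- The BCZ map Φ preserves Lebesgue measure restricted to the Farey triangle Ω, i.e., for every measurable set A ⊆ Ω, the Lebesgue measure of Φ⁻¹(A) ∩ Ω equals the Lebesgue measure of A. -/
open Set MeasureTheory

namespace BCZaux

/-- The linear map that agrees with `BCZ` on the `k`-th piece. -/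
def Tm (k : ℤ) (p : ℝ × ℝ) : ℝ × ℝ := (p.2, (k : ℝ) * p.2 - p.1)

/-- floor index for the forward map -/
noncomputable def F (p : ℝ × ℝ) : ℤ := ⌊(1 + p.1) / p.2⌋
/-- floor index for the inverse map -/
noncomputable def G (q : ℝ × ℝ) : ℤ := ⌊(1 + q.2) / q.1⌋

lemma Tm_measurePreserving (k : ℤ) :
    MeasurePreserving (Tm k) (volume : Measure (ℝ × ℝ)) volume := by
  have hswap : MeasurePreserving Prod.swap (volume : Measure (ℝ × ℝ)) volume := by
    rw [Measure.volume_eq_prod]; exact Measure.measurePreserving_swap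
  have hshear : MeasurePreserving (fun q : ℝ × ℝ => (q.1, (k : ℝ) * q.1 - q.2))
      (volume : Measure (ℝ × ℝ)) volume := by
    rw [Measure.volume_eq_prod]
    exact (MeasurePreserving.id volume).skew_product
      (g := fun x y => (k : ℝ) * x - y)
      ((measurable_fst.const_mul _).sub measurable_snd)
      (Filter.Eventually.of_forall fun x =>
        (Measure.measurePreserving_sub_left volume ((k : ℝ) * x)).map_eq)
  have : Tm k = (fun q : ℝ × ℝ => (q.1, (k : ℝ) * q.1 - q.2)) ∘ Prod.swap := by
    ext p <;> simp [Tm]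
  rw [this]
  exact hshear.comp hswap

lemma measurable_F : Measurable F := by
  apply Measurable.floor
  fun_prop

lemma measurable_G : Measurable G := by
  apply Measurable.floor
  fun_prop

lemma measurable_BCZ : Measurable BCZ := by
  have h : Measurable fun p : ℝ × ℝ => ((⌊(1 + p.1) / p.2⌋ : ℤ) : ℝ) :=
    measurable_from_top.comp (by apply Measurable.floor; fun_prop)
  exact measurable_snd.prodMk ((measurable_fst.neg).add (h.mul measurable_snd))

lemma measurableSet_Farey : MeasurableSet FareyTriangle := by
  have h1 : MeasurableSet {p : ℝ × ℝ | 0 < p.1} := measurableSet_lt measurable_const measurable_fst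
  have h2 : MeasurableSet {p : ℝ × ℝ | p.1 ≤ 1} := measurableSet_le measurable_fst measurable_const
  have h3 : MeasurableSet {p : ℝ × ℝ | 0 < p.2} := measurableSet_lt measurable_const measurable_snd
  have h4 : MeasurableSet {p : ℝ × ℝ | p.2 ≤ 1} := measurableSet_le measurable_snd measurable_const
  have h5 : MeasurableSet {p : ℝ × ℝ | 1 < p.1 + p.2} :=
    measurableSet_lt measurable_const (measurable_fst.add measurable_snd)
  have : FareyTriangle = {p : ℝ × ℝ | 0 < p.1} ∩ {p | p.1 ≤ 1} ∩ {p | 0 < p.2} ∩ {p | p.2 ≤ 1}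
      ∩ {p | 1 < p.1 + p.2} := by
    ext p
    simp only [FareyTriangle, mem_setOf_eq, mem_inter_iff]
    tauto
  rw [this]
  exact ((((h1.inter h2).inter h3).inter h4).inter h5)

lemma F_bounds {p : ℝ × ℝ} (hp : p ∈ FareyTriangle) :
    (F p : ℝ) * p.2 ≤ 1 + p.1 ∧ 1 + p.1 < ((F p : ℝ) + 1) * p.2 := by
  obtain ⟨h1, h2, h3, h4, h5⟩ := hp
  have hfl := Int.floor_le ((1 + p.1) / p.2)
  have hfl' := Int.lt_floor_add_one ((1 + p.1) / p.2)
  exact ⟨(le_div_iff₀ h3).mp hfl, (div_lt_iff₀ h3).mp hfl'⟩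

/-- forward: the image of the `k`-th piece lands in `Ω ∩ {G = k}`. -/
lemma forward {p : ℝ × ℝ} (hp : p ∈ FareyTriangle) :
    Tm (F p) p ∈ FareyTriangle ∧ G (Tm (F p) p) = F p := by
  obtain ⟨hlb, hub⟩ := F_bounds hp
  obtain ⟨h1, h2, h3, h4, h5⟩ := hp
  have ht1 : 0 < (F p : ℝ) * p.2 - p.1 := by nlinarith
  have ht2 : (F p : ℝ) * p.2 - p.1 ≤ 1 := by nlinarith
  have hsum : p.2 + ((F p : ℝ) * p.2 - p.1) > 1 := by nlinarith
  refine ⟨⟨h3, h4, ht1, ht2, hsum⟩, ?_⟩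
  show ⌊(1 + ((F p : ℝ) * p.2 - p.1)) / p.2⌋ = F p
  rw [Int.floor_eq_iff]
  rw [le_div_iff₀ h3, div_lt_iff₀ h3]
  constructor <;> nlinarith

lemma G_bounds {q : ℝ × ℝ} (hq : q ∈ FareyTriangle) :
    (G q : ℝ) * q.1 ≤ 1 + q.2 ∧ 1 + q.2 < ((G q : ℝ) + 1) * q.1 := by
  obtain ⟨h1, h2, h3, h4, h5⟩ := hq
  have hfl := Int.floor_le ((1 + q.2) / q.1)
  have hfl' := Int.lt_floor_add_one ((1 + q.2) / q.1)
  exact ⟨(le_div_iff₀ h1).mp hfl, (div_lt_iff₀ h1).mp hfl'⟩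

/-- backward: every `q ∈ Ω` with `G q = k` has a preimage under `Tm k` in `Ω ∩ {F = k}`. -/
lemma backward {q : ℝ × ℝ} (hq : q ∈ FareyTriangle) :
    ((G q : ℝ) * q.1 - q.2, q.1) ∈ FareyTriangle ∧
    F ((G q : ℝ) * q.1 - q.2, q.1) = G q ∧
    Tm (G q) ((G q : ℝ) * q.1 - q.2, q.1) = q := by
  obtain ⟨hlb, hub⟩ := G_bounds hq
  obtain ⟨h1, h2, h3, h4, h5⟩ := hq
  have hs1 : 0 < (G q : ℝ) * q.1 - q.2 := by nlinarith
  have hs2 : (G q : ℝ) * q.1 - q.2 ≤ 1 := by nlinarith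
  have hsum : ((G q : ℝ) * q.1 - q.2) + q.1 > 1 := by nlinarith
  refine ⟨⟨hs1, hs2, h1, h2, hsum⟩, ?_, ?_⟩
  · show ⌊(1 + ((G q : ℝ) * q.1 - q.2)) / q.1⌋ = G q
    rw [Int.floor_eq_iff, le_div_iff₀ h1, div_lt_iff₀ h1]
    constructor <;> nlinarith
  · show (q.1, (G q : ℝ) * q.1 - ((G q : ℝ) * q.1 - q.2)) = q
    ext <;> simp

lemma BCZ_eq_Tm {p : ℝ × ℝ} : BCZ p = Tm (F p) p := by
  simp only [BCZ, Tm, F]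
  ext <;> simp <;> ring

end BCZaux

open BCZaux

theorem BCZ_measure_preserving (A : Set (ℝ × ℝ)) (hA : MeasurableSet A)
    (hAΩ : A ⊆ FareyTriangle) :
    volume (BCZ ⁻¹' A ∩ FareyTriangle) = volume A := by
  -- key set identity: the k-th piece of the preimage is a linear preimage
  have key : ∀ k : ℤ,
      BCZ ⁻¹' A ∩ FareyTriangle ∩ F ⁻¹' {k} = Tm k ⁻¹' (A ∩ G ⁻¹' {k}) := by
    intro k
    ext p
    constructor
    · rintro ⟨⟨hpA, hpΩ⟩, hk⟩
      simp only [mem_preimage, mem_singleton_iff] at hk ⊢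
      have hfwd := forward hpΩ
      rw [hk] at hfwd
      have hpA' : BCZ p ∈ A := hpA
      rw [BCZ_eq_Tm, hk] at hpA'
      exact ⟨hpA', hfwd.2⟩
    · rintro ⟨hqA, hk⟩
      simp only [mem_preimage, mem_singleton_iff] at hk
      have hqΩ := hAΩ hqA
      obtain ⟨hmem, hF, hTm⟩ := backward hqΩ
      rw [hk] at hmem hF hTm
      -- show p equals the backward point
      have hp_eq : ((k : ℝ) * (Tm k p).1 - (Tm k p).2, (Tm k p).1) = p := by
        simp only [Tm]; ext <;> simp <;> ring
      rw [hp_eq] at hmem hF hTm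
      refine ⟨⟨?_, hmem⟩, ?_⟩
      · show BCZ p ∈ A
        rw [BCZ_eq_Tm, hF, hTm]; exact hqA
      · simpa using hF
  -- decompose both sides over k
  have hmeasΩ := measurableSet_Farey
  have hLHS : BCZ ⁻¹' A ∩ FareyTriangle = ⋃ k : ℤ, BCZ ⁻¹' A ∩ FareyTriangle ∩ F ⁻¹' {k} := by
    ext p
    simp only [mem_iUnion, mem_inter_iff, mem_preimage, mem_singleton_iff]
    constructor
    · intro h; exact ⟨F p, ⟨h, rfl⟩⟩
    · rintro ⟨k, h, -⟩; exact h
  have hRHS : A = ⋃ k : ℤ, A ∩ G ⁻¹' {k} := by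
    ext q
    simp only [mem_iUnion, mem_inter_iff, mem_preimage, mem_singleton_iff]
    constructor
    · intro h; exact ⟨G q, h, rfl⟩
    · rintro ⟨k, h, -⟩; exact h
  have hmL : ∀ k : ℤ, MeasurableSet (BCZ ⁻¹' A ∩ FareyTriangle ∩ F ⁻¹' {k}) := fun k =>
    ((measurable_BCZ hA).inter hmeasΩ).inter (measurable_F (measurableSet_singleton k))
  have hmR : ∀ k : ℤ, MeasurableSet (A ∩ G ⁻¹' {k}) := fun k =>
    hA.inter (measurable_G (measurableSet_singleton k))
  have hdL : Pairwise (Function.onFun Disjoint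
      (fun k : ℤ => BCZ ⁻¹' A ∩ FareyTriangle ∩ F ⁻¹' {k})) := by
    intro i j hij
    apply Set.disjoint_left.2
    rintro p ⟨-, hi⟩ ⟨-, hj⟩
    simp only [mem_preimage, mem_singleton_iff] at hi hj
    exact hij (hi.symm.trans hj)
  have hdR : Pairwise (Function.onFun Disjoint (fun k : ℤ => A ∩ G ⁻¹' {k})) := by
    intro i j hij
    apply Set.disjoint_left.2
    rintro q ⟨-, hi⟩ ⟨-, hj⟩
    simp only [mem_preimage, mem_singleton_iff] at hi hj
    exact hij (hi.symm.trans hj)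
  have e1 : volume (BCZ ⁻¹' A ∩ FareyTriangle)
      = ∑' k : ℤ, volume (BCZ ⁻¹' A ∩ FareyTriangle ∩ F ⁻¹' {k}) := by
    conv_lhs => rw [hLHS]
    exact measure_iUnion hdL hmL
  have e3 : volume A = ∑' k : ℤ, volume (A ∩ G ⁻¹' {k}) := by
    conv_lhs => rw [hRHS]
    exact measure_iUnion hdR hmR
  rw [e1, e3]
  refine tsum_congr fun k => ?_
  rw [key k]
  exact (Tm_measurePreserving k).measure_preimage (hmR k).nullMeasurableSet
end
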